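/- arXiv:1407.8137 — 3 statements merged into one kernel-verified Lean document; each statement's English description precedes it below -/
import Mathlib

section
/- Let $w_1^+ \le w_2^+ \le w_3^+$ and $w_1^- \le w_2^- \le w_3^-$ be real numbers with $w_1^+ + w_2^+ + w_3^+ = 0$ and $w_1^- + w_2^- + w_3^- = 0$. Then $\sum_{i=1}^3 (w_i^+)^2 + \sum_{i=1}^3 (w_i^-)^2 \le 6\,(w_1^+ + w_1^-)^2$. -/
/-- For two ordered zero-sum triples (modelling the eigenvalues of `W⁺` and `W⁻`),
the sum of all squares is at most `6 (w₁⁺ + w₁⁻)²`. -/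
theorem two_ordered_zero_sum_triples_sq_sum_le
    (wp1 wp2 wp3 wm1 wm2 wm3 : ℝ)
    (hp12 : wp1 ≤ wp2) (hp23 : wp2 ≤ wp3) (hpsum : wp1 + wp2 + wp3 = 0)
    (hm12 : wm1 ≤ wm2) (hm23 : wm2 ≤ wm3) (hmsum : wm1 + wm2 + wm3 = 0) :
    (wp1 ^ 2 + wp2 ^ 2 + wp3 ^ 2) + (wm1 ^ 2 + wm2 ^ 2 + wm3 ^ 2)
      ≤ 6 * (wp1 + wm1) ^ 2 := by
  have hp1 : wp1 ≤ 0 := by nlinarith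
  have hm1 : wm1 ≤ 0 := by nlinarith
  nlinarith [mul_nonneg (neg_nonneg.2 hp1) (neg_nonneg.2 hm1), sq_nonneg (wp2 - wp3), sq_nonneg (wm2 - wm3)]
end

section
/- Let $E$ be a real inner product space of dimension $3$ and let $T : E \to E$ be a symmetric linear endomorphism with $\operatorname{trace}(T) = 0$. Let $\mu$ denote the smallest eigenvalue of $T$. Then $\operatorname{trace}(T \circ T) \le 6\,\mu^2$. -/
open LinearMap Module Finset

/- Writing `f i = μ + g i` with `g ≥ 0` and `∑ g = -#s μ`, the bound is
`∑ g² ≤ (∑ g)²` after expanding the squares. -/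
lemma Finset.sum_sq_le_card_mul_card_sub_one_mul_sq {ι R : Type*} [CommRing R] [LinearOrder R]
    [IsStrictOrderedRing R] {s : Finset ι} {f : ι → R} {μ : R} (hsum : ∑ i ∈ s, f i = 0)
    (hle : ∀ i ∈ s, μ ≤ f i) :
    ∑ i ∈ s, f i ^ 2 ≤ #s * (#s - 1) * μ ^ 2 := by
  have hshift : ∑ i ∈ s, (f i - μ) = -(#s * μ) := by
    rw [sum_sub_distrib, hsum, sum_const, nsmul_eq_mul, zero_sub]
  have hsq : ∑ i ∈ s, (f i - μ) ^ 2 ≤ (#s * μ) ^ 2 := by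
    simpa [hshift] using sum_sq_le_sq_sum_of_nonneg fun i hi ↦ sub_nonneg.2 (hle i hi)
  have hexpand : ∑ i ∈ s, f i ^ 2 =
      ∑ i ∈ s, (f i - μ) ^ 2 + 2 * μ * ∑ i ∈ s, (f i - μ) + #s * μ ^ 2 := by
    simp only [mul_sum, ← nsmul_eq_mul, ← sum_const, ← sum_add_distrib]
    exact sum_congr rfl fun i _ ↦ by ring
  rw [hexpand, hshift]
  linear_combination hsq

namespace LinearMap.IsSymmetric

variable {𝕜 E : Type*} [RCLike 𝕜] [NormedAddCommGroup E] [InnerProductSpace 𝕜 E]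
  [FiniteDimensional 𝕜 E] {n : ℕ} (hn : finrank 𝕜 E = n) {T : E →ₗ[𝕜] E}

lemma trace_comp_self_eq_sum_sq_eigenvalues (hT : T.IsSymmetric) :
    trace 𝕜 E (T ∘ₗ T) = ∑ i, (hT.eigenvalues hn i : 𝕜) ^ 2 := by
  rw [trace_eq_sum_inner _ (hT.eigenvectorBasis hn)]
  refine Fintype.sum_congr _ _ fun i ↦ ?_
  simp [hT.apply_eigenvectorBasis, inner_smul_right, sq]

end LinearMap.IsSymmetric

theorem trace_sq_le_six_min_eigenvalue_sq_general
    {E : Type*} [NormedAddCommGroup E] [InnerProductSpace ℝ E]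
    [FiniteDimensional ℝ E] (hdim : Module.finrank ℝ E = 3)
    (T : E →ₗ[ℝ] E) (hT : LinearMap.IsSymmetric T)
    (htr : LinearMap.trace ℝ E T = 0)
    (μ : ℝ)
    (hmin : ∀ ν : ℝ, Module.End.HasEigenvalue T ν → μ ≤ ν) :
    LinearMap.trace ℝ E (T ∘ₗ T) ≤ 6 * μ ^ 2 := by
  have hsum : ∑ i, hT.eigenvalues hdim i = 0 := by
    simpa [htr] using (hT.trace_eq_sum_eigenvalues hdim).symm
  have hle : ∀ i ∈ univ, μ ≤ hT.eigenvalues hdim i :=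
    fun i _ ↦ hmin _ (hT.hasEigenvalue_eigenvalues hdim i)
  calc trace ℝ E (T ∘ₗ T) = ∑ i, hT.eigenvalues hdim i ^ 2 :=
        hT.trace_comp_self_eq_sum_sq_eigenvalues hdim
    _ ≤ #univ * (#univ - 1) * μ ^ 2 := sum_sq_le_card_mul_card_sub_one_mul_sq hsum hle
    _ = 6 * μ ^ 2 := by norm_num

/-- For a traceless symmetric endomorphism `T` of a 3-dimensional real inner
product space with smallest eigenvalue `μ`, one has `trace (T ∘ T) ≤ 6 μ²`. -/
theorem trace_sq_le_six_min_eigenvalue_sq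
    {E : Type*} [NormedAddCommGroup E] [InnerProductSpace ℝ E]
    [FiniteDimensional ℝ E] (hdim : Module.finrank ℝ E = 3)
    (T : E →ₗ[ℝ] E) (hT : LinearMap.IsSymmetric T)
    (htr : LinearMap.trace ℝ E T = 0)
    (μ : ℝ) (hμ : Module.End.HasEigenvalue T μ)
    (hmin : ∀ ν : ℝ, Module.End.HasEigenvalue T ν → μ ≤ ν) :
    LinearMap.trace ℝ E (T ∘ₗ T) ≤ 6 * μ ^ 2 :=
  trace_sq_le_six_min_eigenvalue_sq_general hdim T hT htr μ hmin
end

section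
/- Let $s$ be a real number and let $w_1^+ \le w_2^+ \le w_3^+$ and $w_1^- \le w_2^- \le w_3^-$ be real numbers with $w_1^+ + w_2^+ + w_3^+ = 0$ and $w_1^- + w_2^- + w_3^- = 0$. Set $K_1 := \tfrac{w_1^+ + w_1^-}{2} + \tfrac{s}{12}$. Then $\tfrac{s^2}{24} + \sum_{i=1}^3 (w_i^+)^2 + \sum_{i=1}^3 (w_i^-)^2 \ge 2\,K_1^2$. -/
/-- Pointwise inequality `s²/24 + |W|² ≥ 2 (K₁⊥)²` where
`K₁ = (w₁⁺ + w₁⁻)/2 + s/12`. -/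
theorem scalar_plus_weyl_sq_ge_two_K1_sq
    (s wp1 wp2 wp3 wm1 wm2 wm3 : ℝ)
    (hp12 : wp1 ≤ wp2) (hp23 : wp2 ≤ wp3) (hpsum : wp1 + wp2 + wp3 = 0)
    (hm12 : wm1 ≤ wm2) (hm23 : wm2 ≤ wm3) (hmsum : wm1 + wm2 + wm3 = 0) :
    s ^ 2 / 24 + ((wp1 ^ 2 + wp2 ^ 2 + wp3 ^ 2) + (wm1 ^ 2 + wm2 ^ 2 + wm3 ^ 2))
      ≥ 2 * ((wp1 + wm1) / 2 + s / 12) ^ 2 := by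
  nlinarith [sq_nonneg (wp1+2*wp2), sq_nonneg (wm1+2*wm2), sq_nonneg (wp1-wm1), sq_nonneg (3*(wp1+wm1)-s), hpsum, hmsum]
end
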